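/- arXiv:2101.06745 — 3 statements merged into one kernel-verified Lean document; each statement's English description precedes it below -/
import Mathlib

section
/- Suppose Ã ∈ ℝ^{r×r} is Hurwitz, the Sylvester equations A P₁₂ + P₁₂ Ãᵀ + B Cᵢ P₂₃ᵀ + P₁₃ Cᵢᵀ B̃ᵀ + B Dᵢ Dᵢᵀ B̃ᵀ = 0 hold, W̃ᵀ P₁₂ = I (where Ṽ = P₁₂, W̃ᵀ Ṽ = I), Ã = W̃ᵀ A Ṽ, B̃ = W̃ᵀ B, W̃ᵀ P₁₃ = P₂₃, and the reduced Lyapunov equation Ã P̃ + P̃ Ãᵀ + B̃ Cᵢ P₂₃ᵀ + P₂₃ Cᵢᵀ B̃ᵀ + B̃ Dᵢ Dᵢᵀ B̃ᵀ = 0 has a unique solution P̃. Then P̃ = I_r. -/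
open Matrix

/-- A real square matrix is Hurwitz if all of its (complex) eigenvalues have
strictly negative real part. -/
def IsHurwitz {k : Type*} [Fintype k] [DecidableEq k] (A : Matrix k k ℝ) : Prop :=
  ∀ μ ∈ spectrum ℂ (A.map (algebraMap ℝ ℂ)), μ.re < 0

/-- At a fixed point with `Ṽ = P₁₂`, `W̃ᵀ Ṽ = I` and `W̃ᵀ P₁₃ = P₂₃`, the unique
solution of the reduced Lyapunov equation is the identity: `P̃ = I`. -/
theorem reduced_gramian_eq_one
    {n r ni m : ℕ}
    (A : Matrix (Fin n) (Fin n) ℝ) (B : Matrix (Fin n) (Fin m) ℝ)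
    (Ci : Matrix (Fin m) (Fin ni) ℝ) (Di : Matrix (Fin m) (Fin m) ℝ)
    (P12 W : Matrix (Fin n) (Fin r) ℝ)
    (P13 : Matrix (Fin n) (Fin ni) ℝ) (P23 : Matrix (Fin r) (Fin ni) ℝ)
    (At : Matrix (Fin r) (Fin r) ℝ) (Bt : Matrix (Fin r) (Fin m) ℝ)
    (Pt : Matrix (Fin r) (Fin r) ℝ)
    (hAt : IsHurwitz At)
    (hSyl : A * P12 + P12 * Atᵀ + B * Ci * P23ᵀ + P13 * Ciᵀ * Btᵀ + B * Di * Diᵀ * Btᵀ = 0)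
    (hWV : Wᵀ * P12 = 1)
    (hAdef : At = Wᵀ * A * P12)
    (hBdef : Bt = Wᵀ * B)
    (hP23 : Wᵀ * P13 = P23)
    (hPt : At * Pt + Pt * Atᵀ + Bt * Ci * P23ᵀ + P23 * Ciᵀ * Btᵀ + Bt * Di * Diᵀ * Btᵀ = 0)
    (huniq : ∃! X : Matrix (Fin r) (Fin r) ℝ,
      At * X + X * Atᵀ + Bt * Ci * P23ᵀ + P23 * Ciᵀ * Btᵀ + Bt * Di * Diᵀ * Btᵀ = 0) :
    Pt = 1 := by
  obtain ⟨X, _, hu⟩ := huniq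
  have h1 : At * 1 + 1 * Atᵀ + Bt * Ci * P23ᵀ + P23 * Ciᵀ * Btᵀ + Bt * Di * Diᵀ * Btᵀ = 0 := by
    have := congrArg (fun M => Wᵀ * M) hSyl
    simp only [Matrix.mul_add, Matrix.mul_zero] at this
    rw [mul_one, one_mul, hAdef, hBdef, ← hP23]
    calc Wᵀ * A * P12 + (Wᵀ * A * P12)ᵀ + Wᵀ * B * Ci * (Wᵀ * P13)ᵀ +
          Wᵀ * P13 * Ciᵀ * (Wᵀ * B)ᵀ + Wᵀ * B * Di * Diᵀ * (Wᵀ * B)ᵀ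
        = Wᵀ * (A * P12) + Wᵀ * (P12 * Atᵀ) + Wᵀ * (B * Ci * P23ᵀ) +
          Wᵀ * (P13 * Ciᵀ * Btᵀ) + Wᵀ * (B * Di * Diᵀ * Btᵀ) := by
          rw [hAdef, hBdef, ← hP23]
          have h2 : (Wᵀ * A * P12)ᵀ = Wᵀ * (P12 * (Wᵀ * A * P12)ᵀ) := by
            rw [← Matrix.mul_assoc, hWV, one_mul]
          rw [← h2]
          simp [Matrix.mul_assoc, Matrix.transpose_mul]
      _ = 0 := this
  have hPtX : Pt = X := hu Pt hPt
  have h1X : (1 : Matrix (Fin r) (Fin r) ℝ) = X := hu 1 h1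
  rw [hPtX, h1X]
end

section
/- Suppose Ã ∈ ℝ^{r×r} is Hurwitz, Aᵀ Q₁₂ + Q₁₂ Ã + Cᵀ B₀ᵀ Q₂₄ᵀ − Q₁₄ B₀ C̃ − Cᵀ D₀ᵀ D₀ C̃ = 0 holds, Ṽᵀ Q₁₂ = −I (where W̃ = −Q₁₂, W̃ᵀ Ṽ = I), Ã = W̃ᵀ A Ṽ, C̃ = C Ṽ, Ṽᵀ Q₁₄ = −Q₂₄, and the reduced Lyapunov equation Ãᵀ Q̃ + Q̃ Ã − C̃ᵀ B₀ᵀ Q₂₄ᵀ − Q₂₄ B₀ C̃ + C̃ᵀ D₀ᵀ D₀ C̃ = 0 has a unique solution Q̃. Then Q̃ = I_r. -/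
open Matrix

/-- At a fixed point with `W̃ = −Q₁₂`, `Ṽᵀ Q₁₂ = −I` and `Ṽᵀ Q₁₄ = −Q₂₄`, the unique
solution of the reduced observability Lyapunov equation is the identity: `Q̃ = I`. -/
theorem reduced_obs_gramian_eq_one
    {n r no p : ℕ}
    (A : Matrix (Fin n) (Fin n) ℝ) (C : Matrix (Fin p) (Fin n) ℝ)
    (Bo : Matrix (Fin no) (Fin p) ℝ) (Do : Matrix (Fin p) (Fin p) ℝ)
    (Q12 V : Matrix (Fin n) (Fin r) ℝ)
    (Q14 : Matrix (Fin n) (Fin no) ℝ) (Q24 : Matrix (Fin r) (Fin no) ℝ)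
    (At : Matrix (Fin r) (Fin r) ℝ) (Ct : Matrix (Fin p) (Fin r) ℝ)
    (Qt : Matrix (Fin r) (Fin r) ℝ)
    (hAt : IsHurwitz At)
    (hSyl : Aᵀ * Q12 + Q12 * At + Cᵀ * Boᵀ * Q24ᵀ - Q14 * Bo * Ct - Cᵀ * Doᵀ * Do * Ct = 0)
    (hVQ : Vᵀ * Q12 = -1)
    (hAdef : At = (-Q12)ᵀ * A * V)
    (hCdef : Ct = C * V)
    (hQ24 : Vᵀ * Q14 = -Q24)
    (hQt : Atᵀ * Qt + Qt * At - Ctᵀ * Boᵀ * Q24ᵀ - Q24 * Bo * Ct + Ctᵀ * Doᵀ * Do * Ct = 0)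
    (huniq : ∃! X : Matrix (Fin r) (Fin r) ℝ,
      Atᵀ * X + X * At - Ctᵀ * Boᵀ * Q24ᵀ - Q24 * Bo * Ct + Ctᵀ * Doᵀ * Do * Ct = 0) :
    Qt = 1 := by
  obtain ⟨X, _, huX⟩ := huniq
  have hId : Atᵀ * 1 + 1 * At - Ctᵀ * Boᵀ * Q24ᵀ - Q24 * Bo * Ct + Ctᵀ * Doᵀ * Do * Ct = 0 := by
    have h := congrArg (fun M => Vᵀ * M) hSyl
    simp only [Matrix.mul_add, Matrix.mul_sub, Matrix.mul_zero] at h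
    have e1 : Vᵀ * (Aᵀ * Q12) = -Atᵀ := by
      rw [hAdef]; simp only [transpose_mul, transpose_transpose, transpose_neg,
        Matrix.mul_neg, Matrix.neg_mul, neg_neg, Matrix.mul_assoc]
    have e2 : Vᵀ * (Q12 * At) = -At := by
      rw [← Matrix.mul_assoc, hVQ, Matrix.neg_mul, Matrix.one_mul]
    have e3 : Vᵀ * (Cᵀ * Boᵀ * Q24ᵀ) = Ctᵀ * Boᵀ * Q24ᵀ := by
      rw [hCdef, transpose_mul]
      simp only [Matrix.mul_assoc]
    have e4 : Vᵀ * (Q14 * Bo * Ct) = -(Q24 * Bo * Ct) := by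
      rw [Matrix.mul_assoc Q14, ← Matrix.mul_assoc, hQ24, Matrix.neg_mul, Matrix.mul_assoc]
    have e5 : Vᵀ * (Cᵀ * Doᵀ * Do * Ct) = Ctᵀ * Doᵀ * Do * Ct := by
      rw [hCdef, transpose_mul]
      simp only [Matrix.mul_assoc]
    rw [e1, e2, e3, e4, e5] at h
    rw [Matrix.mul_one, Matrix.one_mul]
    linear_combination (norm := abel) -h
  rw [huX Qt hQt, huX 1 hId]
end

section
/- Let Ṽ, W̃ ∈ ℝ^{n×r} with W̃ full column rank and W̃ᵀ Ṽ = I. Suppose R₁ := A Ṽ P̃ Ṽᵀ + Ṽ P̃ Ṽᵀ Aᵀ + B Cᵢ P₁₃ᵀ + P₁₃ Cᵢᵀ Bᵀ + B Dᵢ Dᵢᵀ Bᵀ satisfies W̃ᵀ R₁ W̃ = 0, where P̃ solves the reduced equation Ã P̃ + P̃ Ãᵀ + B̃ Cᵢ P₂₃ᵀ + P₂₃ Cᵢᵀ B̃ᵀ + B̃ Dᵢ Dᵢᵀ B̃ᵀ = 0 with Ã = W̃ᵀ A Ṽ Hurwitz and B̃ = W̃ᵀ B. Then W̃ᵀ (B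 Cᵢ (P₁₃ − Ṽ P₂₃)ᵀ + (P₁₃ − Ṽ P₂₃) Cᵢᵀ Bᵀ) W̃ = 0. -/
open Matrix

/-- The Petrov–Galerkin condition `W̃ᵀ R₁ W̃ = 0` on the full-order Lyapunov residual,
combined with the reduced-order Lyapunov equation, constrains the defect
`P₁₃ − Ṽ P₂₃`. -/
theorem petrov_galerkin_defect
    {n r ni m : ℕ}
    (A : Matrix (Fin n) (Fin n) ℝ) (B : Matrix (Fin n) (Fin m) ℝ)
    (Ci : Matrix (Fin m) (Fin ni) ℝ) (Di : Matrix (Fin m) (Fin m) ℝ)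
    (V W : Matrix (Fin n) (Fin r) ℝ)
    (P13 : Matrix (Fin n) (Fin ni) ℝ) (P23 : Matrix (Fin r) (Fin ni) ℝ)
    (Pt : Matrix (Fin r) (Fin r) ℝ)
    (hrank : W.rank = r)
    (hWV : Wᵀ * V = 1)
    (hAt : IsHurwitz (Wᵀ * A * V))
    (hPt : (Wᵀ * A * V) * Pt + Pt * (Wᵀ * A * V)ᵀ + (Wᵀ * B) * Ci * P23ᵀ
      + P23 * Ciᵀ * (Wᵀ * B)ᵀ + (Wᵀ * B) * Di * Diᵀ * (Wᵀ * B)ᵀ = 0)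
    (hres : Wᵀ * (A * (V * Pt * Vᵀ) + (V * Pt * Vᵀ) * Aᵀ + B * Ci * P13ᵀ
      + P13 * Ciᵀ * Bᵀ + B * Di * Diᵀ * Bᵀ) * W = 0) :
    Wᵀ * (B * Ci * (P13 - V * P23)ᵀ + (P13 - V * P23) * Ciᵀ * Bᵀ) * W = 0 := by
  have hVW : Vᵀ * W = 1 := by
    have := congrArg Matrix.transpose hWV
    simpa using this
  have hWV' : ∀ {p : ℕ} (X : Matrix (Fin r) (Fin p) ℝ), Wᵀ * (V * X) = X := by
    intro p X
    rw [← Matrix.mul_assoc, hWV, Matrix.one_mul]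
  have key : Wᵀ * (B * Ci * (P13 - V * P23)ᵀ + (P13 - V * P23) * Ciᵀ * Bᵀ) * W
      = (Wᵀ * (A * (V * Pt * Vᵀ) + (V * Pt * Vᵀ) * Aᵀ + B * Ci * P13ᵀ
        + P13 * Ciᵀ * Bᵀ + B * Di * Diᵀ * Bᵀ) * W)
      - ((Wᵀ * A * V) * Pt + Pt * (Wᵀ * A * V)ᵀ + (Wᵀ * B) * Ci * P23ᵀ
        + P23 * Ciᵀ * (Wᵀ * B)ᵀ + (Wᵀ * B) * Di * Diᵀ * (Wᵀ * B)ᵀ) := by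
    simp only [Matrix.transpose_sub, Matrix.transpose_mul, Matrix.transpose_transpose,
      Matrix.mul_assoc, Matrix.mul_add, Matrix.add_mul, Matrix.sub_mul, Matrix.mul_sub,
      hWV, hVW, hWV', Matrix.mul_one, Matrix.one_mul]
    abel
  rw [key, hres, hPt, sub_zero]
end
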